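/- Let n, p, k be integers with 0 ≤ k < p−1, p < n and n−p+k > p, and suppose that k and n−p are even. Let σ_n : ℝ^n → ℝ^n be the involution that negates the coordinates u_1,…,u_k and u_{p+1},…,u_n: σ_n(u) = (−u_1,…,−u_k, u_{k+1},…,u_p, −u_{p+1},…,−u_n). Then σ_n maps R(n,p,k) onto itself, and its restriction to R(n,p,k) is isotopic to the identity: there is a continuous map H : R(n,p,k) × [0,1] → R(n,p,k) with H(u,0) = u and H(u,1) = σ_n(u) for all u, such that for every t ∈ [0,1] the map u ↦ H(u,t) is a homeomorphism of R(n,p,k). -/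

import Mathlib

open Metric

/-- The intersection of two quadrics in ℝⁿ associated to the polytope `P_k`:
`u₁² + ⋯ + u_p² = p` and `u₁² + ⋯ + u_k² + u_{p+1}² + ⋯ + u_n² = n - p + k`. -/
def quadR (n p k : ℕ) : Set (EuclideanSpace ℝ (Fin n)) :=
  {u | (∑ j : Fin n, if (j : ℕ) < p then u j ^ 2 else 0) = (p : ℝ) ∧
       (∑ j : Fin n, if (j : ℕ) < k ∨ p ≤ (j : ℕ) then u j ^ 2 else 0) = (n : ℝ) - p + k}

/-- The involution of ℝⁿ negating the coordinates `u₁, …, u_k` and `u_{p+1}, …, u_n`. -/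
def sigmaN (n p k : ℕ) : EuclideanSpace ℝ (Fin n) → EuclideanSpace ℝ (Fin n) :=
  fun u => WithLp.toLp 2 (fun j : Fin n => if (j : ℕ) < k ∨ p ≤ (j : ℕ) then -u j else u j)

/-!
The negated coordinates come in an even number in each of the two blocks `[0, k)` and `[p, n)`,
so they can be grouped into consecutive pairs inside each block. Rotating every such pair of
coordinates by the same angle `θ` is a flow on `ℝⁿ`; it preserves `u_a² + u_b²` for each pair,
hence both quadrics, and at `θ = π` it is `σ_n`. Restricting this flow to `R(n,p,k)` and running
it for times in `[0, π]` gives the isotopy.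
-/

open Real Function

theorem sum_eq_zero_of_apply_involutive_eq_neg {ι : Type*} [Fintype ι] {τ : ι → ι}
    (hτ : Involutive τ) {f : ι → ℝ} (hf : ∀ j, f (τ j) = -f j) : ∑ j, f j = 0 :=
  Finset.sum_ninvolution τ (fun j => by simp [hf])
    (fun j hj hfix => hj (by have h := hf j; rw [hfix] at h; linarith))
    (fun _ => Finset.mem_univ _) hτ

theorem Flow.exists_isotopy_of_isInvariant {α : Type*} [TopologicalSpace α] (ϕ : Flow ℝ α)
    {S : Set α} (hS : IsInvariant ϕ S) (T : ℝ) :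
    ∃ H : S × unitInterval → S,
      Continuous H ∧
      (∀ u : S, H (u, 0) = u) ∧
      (∀ u : S, (H (u, 1) : α) = ϕ T u) ∧
      (∀ t : unitInterval, IsHomeomorph (fun u : S => H (u, t))) := by
  refine ⟨fun x => ϕ.restrict hS (T * x.2) x.1,
    (ϕ.restrict hS).continuous (by fun_prop) (by fun_prop),
    fun u => by simp [Flow.map_zero_apply], fun u => by simp,
    fun t => ((ϕ.restrict hS).toHomeomorph (T * t)).isHomeomorph⟩

noncomputable section PairRotation

variable {ι : Type*} [LinearOrder ι] {τ : ι → ι}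

def pairSign (τ : ι → ι) (j : ι) : ℝ := if j < τ j then -1 else 1

theorem pairSign_mul_self (τ : ι → ι) (j : ι) : pairSign τ j * pairSign τ j = 1 := by
  unfold pairSign; split_ifs <;> norm_num

theorem pairSign_apply_of_ne (hτ : Involutive τ) {j : ι} (hj : τ j ≠ j) :
    pairSign τ (τ j) = -pairSign τ j := by
  unfold pairSign
  rw [hτ j]
  rcases hj.lt_or_gt with h | h <;> simp [h, h.not_gt]

def pairRotation (τ : ι → ι) (θ : ℝ) (u : EuclideanSpace ℝ ι) : EuclideanSpace ℝ ι :=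
  WithLp.toLp 2 fun j => if τ j = j then u j else cos θ * u j + sin θ * (pairSign τ j * u (τ j))

theorem pairRotation_zero (u : EuclideanSpace ℝ ι) : pairRotation τ 0 u = u := by
  ext j; simp [pairRotation]

theorem pairRotation_pi (u : EuclideanSpace ℝ ι) :
    pairRotation τ π u = WithLp.toLp 2 fun j => if τ j = j then u j else -u j := by
  ext j; simp [pairRotation]

theorem pairRotation_add (hτ : Involutive τ) (a b : ℝ) (u : EuclideanSpace ℝ ι) :
    pairRotation τ (a + b) u = pairRotation τ a (pairRotation τ b u) := by
  ext j
  by_cases hj : τ j = j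
  · simp [pairRotation, hj]
  · simp only [pairRotation, PiLp.toLp_apply, if_neg hj, if_neg (Ne.symm hj), hτ j,
      pairSign_apply_of_ne hτ hj, cos_add, sin_add]
    linear_combination sin a * sin b * u j * pairSign_mul_self τ j

theorem continuous_pairRotation : Continuous (uncurry (pairRotation τ)) := by
  refine (PiLp.continuous_toLp 2 _).comp (continuous_pi fun j => ?_)
  by_cases hj : τ j = j <;> simp only [hj, if_true, if_false] <;> fun_prop

def pairRotationFlow (hτ : Involutive τ) : Flow ℝ (EuclideanSpace ℝ ι) where
  toFun := pairRotation τ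
  cont' := continuous_pairRotation
  map_add' := pairRotation_add hτ
  map_zero' := pairRotation_zero

theorem sum_mul_sq_pairRotation [Fintype ι] (hτ : Involutive τ) {w : ι → ℝ}
    (hw : ∀ j, w (τ j) = w j) (θ : ℝ) (u : EuclideanSpace ℝ ι) :
    ∑ j, w j * pairRotation τ θ u j ^ 2 = ∑ j, w j * u j ^ 2 := by
  set g : ι → ℝ := fun j => if τ j = j then 0 else
    w j * (sin θ ^ 2 * (u (τ j) ^ 2 - u j ^ 2) + 2 * sin θ * cos θ * pairSign τ j * u j * u (τ j))
  have hg : ∀ j, g (τ j) = -g j := by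
    intro j
    by_cases hj : τ j = j
    · simp [g, hj]
    · simp only [g, if_neg hj, if_neg (Ne.symm hj), hτ j, hw, pairSign_apply_of_ne hτ hj]
      ring
  have hexpand : ∀ j, w j * pairRotation τ θ u j ^ 2 = w j * u j ^ 2 + g j := by
    intro j
    by_cases hj : τ j = j
    · simp [pairRotation, g, hj]
    · simp only [pairRotation, PiLp.toLp_apply, g, if_neg hj]
      linear_combination w j * sin θ ^ 2 * u (τ j) ^ 2 * pairSign_mul_self τ j +
        w j * u j ^ 2 * sin_sq_add_cos_sq θ
  simp only [hexpand, Finset.sum_add_distrib, sum_eq_zero_of_apply_involutive_eq_neg hτ hg,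
    add_zero]

end PairRotation

section BlockPartner

def blockPartner (p k j : ℕ) : ℕ :=
  if j < k then (if j % 2 = 0 then j + 1 else j - 1)
  else if p ≤ j then (if (j - p) % 2 = 0 then j + 1 else j - 1)
  else j

variable {n p k : ℕ}

theorem blockPartner_eq_self_iff {j : ℕ} : blockPartner p k j = j ↔ ¬(j < k ∨ p ≤ j) := by
  unfold blockPartner; split_ifs <;> omega

theorem blockPartner_blockPartner (hkp : k ≤ p) (hk : Even k) (j : ℕ) :
    blockPartner p k (blockPartner p k j) = j := by
  have := Nat.even_iff.1 hk
  unfold blockPartner; split_ifs <;> omega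

theorem blockPartner_lt_iff (hkp : k ≤ p) (hk : Even k) {j : ℕ} :
    blockPartner p k j < p ↔ j < p := by
  have := Nat.even_iff.1 hk
  unfold blockPartner; split_ifs <;> omega

theorem blockPartner_lt (hkp : k ≤ p) (hpn : p ≤ n) (hk : Even k) (hnp : Even (n - p))
    {j : ℕ} (hj : j < n) : blockPartner p k j < n := by
  have := Nat.even_iff.1 hk
  have := Nat.even_iff.1 hnp
  unfold blockPartner; split_ifs <;> omega

/-- The fallback value `j` is never reached when `k ≤ p ≤ n` and `k`, `n - p` are even. -/
def finBlockPartner (n p k : ℕ) (j : Fin n) : Fin n :=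
  if h : blockPartner p k j < n then ⟨blockPartner p k j, h⟩ else j

variable (hkp : k ≤ p) (hpn : p ≤ n) (hk : Even k) (hnp : Even (n - p))
include hkp hpn hk hnp

theorem val_finBlockPartner (j : Fin n) : (finBlockPartner n p k j : ℕ) = blockPartner p k j := by
  simp [finBlockPartner, blockPartner_lt hkp hpn hk hnp j.isLt]

theorem involutive_finBlockPartner : Involutive (finBlockPartner n p k) := fun j => by
  ext
  rw [val_finBlockPartner hkp hpn hk hnp, val_finBlockPartner hkp hpn hk hnp,
    blockPartner_blockPartner hkp hk]

theorem finBlockPartner_eq_self_iff (j : Fin n) :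
    finBlockPartner n p k j = j ↔ ¬((j : ℕ) < k ∨ p ≤ (j : ℕ)) := by
  rw [Fin.ext_iff, val_finBlockPartner hkp hpn hk hnp, blockPartner_eq_self_iff]

theorem sigmaN_eq_pairRotation_pi : sigmaN n p k = pairRotation (finBlockPartner n p k) π := by
  ext u j
  simp only [sigmaN, pairRotation_pi, finBlockPartner_eq_self_iff hkp hpn hk hnp]
  split_ifs <;> rfl

theorem isInvariant_quadR :
    IsInvariant (pairRotationFlow (involutive_finBlockPartner hkp hpn hk hnp)) (quadR n p k) := by
  set τ := finBlockPartner n p k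
  have hτ := involutive_finBlockPartner hkp hpn hk hnp
  have hsum : ∀ (c : ℕ → Prop) [DecidablePred c], (∀ j, c (τ j) ↔ c j) → ∀ θ u,
      (∑ j : Fin n, if c j then pairRotation τ θ u j ^ 2 else 0) =
        ∑ j : Fin n, if c j then u j ^ 2 else 0 := by
    intro c _ hc θ u
    simpa only [boole_mul] using sum_mul_sq_pairRotation hτ
      (w := fun j => if c j then 1 else 0) (fun j => if_congr (hc j) rfl rfl) θ u
  have hlt : ∀ j, (τ j : ℕ) < p ↔ (j : ℕ) < p := fun j => by
    rw [val_finBlockPartner hkp hpn hk hnp, blockPartner_lt_iff hkp hk]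
  have hneg : ∀ j, ((τ j : ℕ) < k ∨ p ≤ (τ j : ℕ)) ↔ ((j : ℕ) < k ∨ p ≤ (j : ℕ)) := fun j => by
    rw [← not_iff_not, ← finBlockPartner_eq_self_iff hkp hpn hk hnp,
      ← finBlockPartner_eq_self_iff hkp hpn hk hnp, hτ j, eq_comm]
  intro θ u ⟨h₁, h₂⟩
  exact ⟨(hsum (· < p) hlt θ u).trans h₁, (hsum (fun m => m < k ∨ p ≤ m) hneg θ u).trans h₂⟩

end BlockPartner

theorem stmt3_general (n p k : ℕ) (hkp : k + 1 < p) (hpn : p < n)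
    (hke : Even k) (hnpe : Even (n - p)) :
    sigmaN n p k '' quadR n p k = quadR n p k ∧
    ∃ H : quadR n p k × unitInterval → quadR n p k,
      Continuous H ∧
      (∀ u : quadR n p k, H (u, 0) = u) ∧
      (∀ u : quadR n p k, (H (u, 1) : EuclideanSpace ℝ (Fin n)) = sigmaN n p k u) ∧
      (∀ t : unitInterval, IsHomeomorph (fun u : quadR n p k => H (u, t))) := by
  have hkp' : k ≤ p := by omega
  have hS := isInvariant_quadR hkp' hpn.le hke hnpe
  rw [sigmaN_eq_pairRotation_pi hkp' hpn.le hke hnpe]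
  exact ⟨(Flow.isInvariant_iff_image_eq _ _).1 hS π, Flow.exists_isotopy_of_isInvariant _ hS π⟩

/-- If `k` and `n - p` are even, then `σ_n` maps `R(n,p,k)` onto itself and its restriction to
`R(n,p,k)` is isotopic to the identity. -/
theorem stmt3 (n p k : ℕ) (hkp : k + 1 < p) (hpn : p < n) (h : 2 * p < n + k)
    (hke : Even k) (hnpe : Even (n - p)) :
    sigmaN n p k '' quadR n p k = quadR n p k ∧
    ∃ H : quadR n p k × unitInterval → quadR n p k,
      Continuous H ∧
      (∀ u : quadR n p k, H (u, 0) = u) ∧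
      (∀ u : quadR n p k, (H (u, 1) : EuclideanSpace ℝ (Fin n)) = sigmaN n p k u) ∧
      (∀ t : unitInterval, IsHomeomorph (fun u : quadR n p k => H (u, t))) :=
  stmt3_general n p k hkp hpn hke hnpe
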